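/- arXiv:1507.06365 — 3 statements merged into one kernel-verified Lean document; each statement's English description precedes it below -/
import Mathlib

section
/- The relation ≅ is an equivalence relation on subsets of ℤ²: the relation that holds between X₁ and X₂ whenever X₁^a is translation-equivalent to X₂^b for some positive integers a and b is reflexive, symmetric, and transitive. -/
/-- The `c`-scaling of a set `X ⊆ ℤ²`:
`X^c = {(a,b) : (⌊a/c⌋, ⌊b/c⌋) ∈ X}` (floor division). -/
def scaling (X : Set (ℤ × ℤ)) (c : ℕ) : Set (ℤ × ℤ) :=
  {p | (Int.fdiv p.1 (c : ℤ), Int.fdiv p.2 (c : ℤ)) ∈ X}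

/-- The translate `X + v = {p + v : p ∈ X}`. -/
def translateSet (X : Set (ℤ × ℤ)) (v : ℤ × ℤ) : Set (ℤ × ℤ) :=
  (· + v) '' X

/-- `X₁` and `X₂` are translation-equivalent if `X₂ = X₁ + v` for some `v ∈ ℤ²`. -/
def TransEquiv (X₁ X₂ : Set (ℤ × ℤ)) : Prop :=
  ∃ v : ℤ × ℤ, X₂ = translateSet X₁ v

/-- `X₁ ≅ X₂` iff `X₁^a` is translation-equivalent to `X₂^b`
for some positive integers `a`, `b`. -/
def Cong (X₁ X₂ : Set (ℤ × ℤ)) : Prop :=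
  ∃ a b : ℕ, 0 < a ∧ 0 < b ∧ TransEquiv (scaling X₁ a) (scaling X₂ b)

/-! Auxiliary lemmas -/

lemma ediv_ediv' (n a b : ℤ) (ha : 0 < a) (hb : 0 < b) : n / a / b = n / (a * b) := by
  have hab : 0 < a * b := mul_pos ha hb
  apply le_antisymm
  · have h := Int.lt_ediv_add_one_mul_self n hab
    have : n / a / b < n / (a * b) + 1 := by
      rw [Int.ediv_lt_iff_lt_mul hb, Int.ediv_lt_iff_lt_mul ha]
      linarith [h]
    omega
  · rw [Int.le_ediv_iff_mul_le hb, Int.le_ediv_iff_mul_le ha]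
    have h := Int.ediv_mul_le n hab.ne'
    linarith [h]

lemma fdiv_fdiv (n : ℤ) (a b : ℕ) (ha : 0 < a) (hb : 0 < b) :
    (n.fdiv a).fdiv b = n.fdiv ((a * b : ℕ) : ℤ) := by
  have ha' : (0:ℤ) < a := by exact_mod_cast ha
  have hb' : (0:ℤ) < b := by exact_mod_cast hb
  rw [Int.fdiv_eq_ediv_of_nonneg _ ha'.le, Int.fdiv_eq_ediv_of_nonneg _ hb'.le,
    Int.fdiv_eq_ediv_of_nonneg _ (by positivity : (0:ℤ) ≤ ((a*b:ℕ):ℤ))]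
  push_cast
  exact ediv_ediv' n a b ha' hb'

lemma fdiv_add_mul (n k : ℤ) (b : ℕ) (hb : 0 < b) :
    (n + k * b).fdiv b = n.fdiv b + k := by
  have hb' : (0:ℤ) < b := by exact_mod_cast hb
  rw [Int.fdiv_eq_ediv_of_nonneg _ hb'.le, Int.fdiv_eq_ediv_of_nonneg _ hb'.le]
  exact Int.add_mul_ediv_right n k hb'.ne'

lemma fdiv_sub_mul (n k : ℤ) (b : ℕ) (hb : 0 < b) :
    (n - (b:ℤ) * k).fdiv b = n.fdiv b - k := by
  have h := fdiv_add_mul (n - (b:ℤ) * k) k b hb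
  have e : n - (b:ℤ) * k + k * b = n := by ring
  rw [e] at h; omega

lemma mem_translateSet {X : Set (ℤ × ℤ)} {v p : ℤ × ℤ} :
    p ∈ translateSet X v ↔ p - v ∈ X := by
  constructor
  · rintro ⟨q, hq, rfl⟩; simpa using hq
  · intro h; exact ⟨p - v, h, by simp⟩

/-- Scalings compose. -/
lemma scaling_scaling (X : Set (ℤ × ℤ)) (a b : ℕ) (ha : 0 < a) (hb : 0 < b) :
    scaling (scaling X a) b = scaling X (b * a) := by
  ext p
  simp only [scaling, Set.mem_setOf_eq, fdiv_fdiv _ b a hb ha]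

/-- Scaling a translate. -/
lemma scaling_translate (X : Set (ℤ × ℤ)) (v : ℤ × ℤ) (b : ℕ) (hb : 0 < b) :
    scaling (translateSet X v) b = translateSet (scaling X b) ((b : ℤ) • v) := by
  ext p
  simp only [scaling, Set.mem_setOf_eq, mem_translateSet, Prod.fst_sub, Prod.snd_sub,
    Prod.smul_fst, Prod.smul_snd, smul_eq_mul, fdiv_sub_mul _ _ _ hb]
  rw [show (p.1.fdiv b, p.2.fdiv b) - v = (p.1.fdiv b - v.1, p.2.fdiv b - v.2) from rfl]

lemma translateSet_translateSet (X : Set (ℤ × ℤ)) (v w : ℤ × ℤ) :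
    translateSet (translateSet X v) w = translateSet X (v + w) := by
  ext p
  rw [mem_translateSet, mem_translateSet, mem_translateSet, sub_sub, add_comm w v]

/-- The relation `≅` is an equivalence relation on subsets of `ℤ²`. -/
theorem cong_equivalence : Equivalence Cong := by
  constructor
  · intro X
    refine ⟨1, 1, one_pos, one_pos, 0, ?_⟩
    ext p; rw [mem_translateSet]; simp
  · rintro X Y ⟨a, b, ha, hb, v, hv⟩
    refine ⟨b, a, hb, ha, -v, ?_⟩
    ext p; rw [mem_translateSet, hv, mem_translateSet]; simp
  · rintro X Y Z ⟨a, b, ha, hb, v, hv⟩ ⟨c, d, hc, hd, w, hw⟩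
    refine ⟨c * a, b * d, Nat.mul_pos hc ha, Nat.mul_pos hb hd, (c : ℤ) • v + (b : ℤ) • w, ?_⟩
    have key1 : scaling Y (c * b) = translateSet (scaling X (c * a)) ((c : ℤ) • v) := by
      rw [← scaling_scaling Y b c hb hc, hv, scaling_translate _ _ _ hc,
        scaling_scaling X a c ha hc]
    have key2 : scaling Z (b * d) = translateSet (scaling Y (b * c)) ((b : ℤ) • w) := by
      rw [← scaling_scaling Z d b hd hb, hw, scaling_translate _ _ _ hb,
        scaling_scaling Y c b hc hb]
    rw [key2, mul_comm b c, key1, translateSet_translateSet]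
end

section
/- For every set X ⊆ ℤ² and every positive integer c, the grid graph induced by the c-scaling X^c is connected if and only if the grid graph induced by X is connected. -/
/-- The grid graph induced by `Y ⊆ ℤ²`: vertices are the points of `Y` and edges
connect exactly those pairs of points at `ℓ¹`-distance 1. -/
def gridGraph (Y : Set (ℤ × ℤ)) : SimpleGraph Y where
  Adj p q := |p.1.1 - q.1.1| + |p.1.2 - q.1.2| = 1
  symm := by
    constructor
    intro p q h
    rw [abs_sub_comm, abs_sub_comm (q.1.2)]
    exact h
  loopless := by
    constructor
    intro p h
    simp at h

namespace SimpleGraph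

variable {V W : Type*} {G : SimpleGraph V} {H : SimpleGraph W}

theorem Connected.of_surjective_of_adj (hG : G.Connected) (f : V → W)
    (hf : Function.Surjective f) (hadj : ∀ u v, G.Adj u v → f u = f v ∨ H.Adj (f u) (f v)) :
    H.Connected := by
  have : Nonempty W := hG.nonempty.map f
  refine ⟨fun x y => ?_⟩
  obtain ⟨⟨u, rfl⟩, ⟨v, rfl⟩⟩ := And.intro (hf x) (hf y)
  rw [reachable_iff_reflTransGen]
  refine Relation.ReflTransGen.lift' f (fun u v huv => ?_) u v
    ((reachable_iff_reflTransGen u v).1 (hG u v))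
  rw [Function.onFun]
  rcases hadj u v huv with h | h
  · exact h ▸ Relation.ReflTransGen.refl
  · exact Relation.ReflTransGen.single h

theorem Connected.of_surjective_of_exists_adj (hH : H.Connected) (f : V → W)
    (hf : Function.Surjective f) (hfiber : ∀ u v, f u = f v → G.Reachable u v)
    (hlift : ∀ x y, H.Adj x y → ∃ u v, f u = x ∧ f v = y ∧ G.Adj u v) : G.Connected := by
  have : Nonempty V := hH.nonempty.map (Function.surjInv hf)
  have section_reachable (x y : W) : H.Reachable x y →
      G.Reachable (Function.surjInv hf x) (Function.surjInv hf y) := by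
    simp only [reachable_iff_reflTransGen]
    refine Relation.ReflTransGen.lift' _ (fun x y hxy => ?_) x y
    obtain ⟨u, v, rfl, rfl, huv⟩ := hlift x y hxy
    rw [Function.onFun, ← reachable_iff_reflTransGen]
    exact ((hfiber _ _ (Function.surjInv_eq hf _)).trans huv.reachable).trans
      (hfiber _ _ (Function.surjInv_eq hf _).symm)
  refine ⟨fun u v => ?_⟩
  exact ((hfiber _ _ (Function.surjInv_eq hf _).symm).trans
    (section_reachable _ _ (hH (f u) (f v)))).trans (hfiber _ _ (Function.surjInv_eq hf _))

end SimpleGraph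

namespace Int

variable {a b c : ℤ}

theorem ediv_sub_ediv_le_sub (hc : 0 < c) (hba : b ≤ a) : a / c - b / c ≤ a - b := by
  have h : a / c ≤ (b + (a - b) * c) / c := Int.ediv_le_ediv hc (by nlinarith)
  rw [Int.add_mul_ediv_right _ _ hc.ne'] at h
  linarith

theorem abs_ediv_sub_ediv_le (hc : 0 < c) : |a / c - b / c| ≤ |a - b| := by
  wlog hba : b ≤ a generalizing a b
  · rw [abs_sub_comm, abs_sub_comm a]
    exact this (le_of_not_ge hba)
  rw [abs_of_nonneg (sub_nonneg.2 (Int.ediv_le_ediv hc hba)), abs_of_nonneg (sub_nonneg.2 hba)]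
  exact ediv_sub_ediv_le_sub hc hba

theorem mul_add_ediv_of_lt (hc : 0 < c) (x : ℤ) {r : ℤ} (hr : 0 ≤ r) (hrc : r < c) :
    (c * x + r) / c = x := by
  rw [Int.mul_add_ediv_left _ _ hc.ne', Int.ediv_eq_zero_of_lt hr hrc, add_zero]

theorem exists_ediv_eq_ediv_add_one (hc : 0 < c) (x : ℤ) :
    ∃ a, a / c = x ∧ (a + 1) / c = x + 1 :=
  ⟨c * x + (c - 1), mul_add_ediv_of_lt hc x (by omega) (by omega), by
    rw [show c * x + (c - 1) + 1 = c * (x + 1) by ring, Int.mul_ediv_cancel_left _ hc.ne']⟩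

theorem exists_ediv_eq_abs_sub_eq (hc : 0 < c) {x y : ℤ} (h : |x - y| ≤ 1) :
    ∃ a b, a / c = x ∧ b / c = y ∧ |a - b| = |x - y| := by
  rcases abs_le.1 h with ⟨h₁, h₂⟩
  obtain rfl | rfl | rfl : x = y ∨ y = x + 1 ∨ x = y + 1 := by omega
  · exact ⟨c * x, c * x, Int.mul_ediv_cancel_left _ hc.ne', Int.mul_ediv_cancel_left _ hc.ne',
      by simp⟩
  · obtain ⟨a, ha, ha'⟩ := exists_ediv_eq_ediv_add_one hc x
    exact ⟨a, a + 1, ha, ha', by simp⟩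
  · obtain ⟨b, hb, hb'⟩ := exists_ediv_eq_ediv_add_one hc y
    exact ⟨b + 1, b, hb', hb, by simp⟩

end Int

def blockIndex (c : ℤ) (p : ℤ × ℤ) : ℤ × ℤ := (p.1 / c, p.2 / c)

theorem scaling_eq_preimage_blockIndex (X : Set (ℤ × ℤ)) (c : ℕ) :
    scaling X c = blockIndex c ⁻¹' X := by
  ext p
  simp [scaling, blockIndex, Int.fdiv_eq_ediv_of_nonneg _ (Int.natCast_nonneg c)]

section blockIndex

variable {c : ℤ}

theorem blockIndex_smul_add (hc : 0 < c) (x r : ℤ × ℤ) (hr₁ : r.1 ∈ Set.Ico 0 c)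
    (hr₂ : r.2 ∈ Set.Ico 0 c) : blockIndex c (c • x + r) = x := by
  simp only [blockIndex, Prod.fst_add, Prod.snd_add, Prod.smul_fst, Prod.smul_snd, smul_eq_mul,
    Int.mul_add_ediv_of_lt hc _ hr₁.1 hr₁.2, Int.mul_add_ediv_of_lt hc _ hr₂.1 hr₂.2]

theorem blockIndex_smul (hc : 0 < c) (x : ℤ × ℤ) : blockIndex c (c • x) = x := by
  simpa using blockIndex_smul_add hc x 0 ⟨le_rfl, hc⟩ ⟨le_rfl, hc⟩

theorem blockIndex_surjective (hc : 0 < c) : Function.Surjective (blockIndex c) :=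
  fun x => ⟨c • x, blockIndex_smul hc x⟩

theorem abs_blockIndex_sub_le (hc : 0 < c) (p q : ℤ × ℤ) :
    |(blockIndex c p).1 - (blockIndex c q).1| + |(blockIndex c p).2 - (blockIndex c q).2| ≤
      |p.1 - q.1| + |p.2 - q.2| :=
  add_le_add (Int.abs_ediv_sub_ediv_le hc) (Int.abs_ediv_sub_ediv_le hc)

end blockIndex

theorem gridGraph_reachable_of_eq_add_smul {Y : Set (ℤ × ℤ)} {d : ℤ × ℤ}
    (hd : |d.1| + |d.2| = 1) {p q : Y} {n : ℤ} (hn : 0 ≤ n) (hq : q.1 = p.1 + n • d)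
    (hY : ∀ k ∈ Set.Icc 0 n, p.1 + k • d ∈ Y) : (gridGraph Y).Reachable p q := by
  induction n, hn using Int.leInduction generalizing q with
  | base =>
    obtain rfl : q = p := Subtype.ext (by simpa using hq)
    rfl
  | succ n hn ih =>
    have hm : p.1 + n • d ∈ Y := hY n ⟨hn, by omega⟩
    refine (ih (q := ⟨_, hm⟩) rfl fun k hk => hY k ⟨hk.1, by linarith [hk.2]⟩).trans
      (SimpleGraph.Adj.reachable ?_)
    change |(p.1 + n • d).1 - q.1.1| + |(p.1 + n • d).2 - q.1.2| = 1
    simpa [hq, add_smul] using hd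

section gridGraph_preimage

variable {X : Set (ℤ × ℤ)} {c : ℤ}

theorem gridGraph_preimage_blockIndex_reachable_corner (hc : 0 < c) (p : blockIndex c ⁻¹' X) :
    (gridGraph (blockIndex c ⁻¹' X)).Reachable
      ⟨c • blockIndex c p, Set.mem_preimage.2 (by rw [blockIndex_smul hc]; exact p.2)⟩ p := by
  set x := blockIndex c p
  have hr₁ : p.1.1 % c ∈ Set.Ico 0 c := ⟨Int.emod_nonneg _ hc.ne', Int.emod_lt_of_pos _ hc⟩
  have hr₂ : p.1.2 % c ∈ Set.Ico 0 c := ⟨Int.emod_nonneg _ hc.ne', Int.emod_lt_of_pos _ hc⟩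
  have hmid : c • x + (p.1.1 % c, 0) ∈ blockIndex c ⁻¹' X := Set.mem_preimage.2 (by
    rw [blockIndex_smul_add hc x _ hr₁ ⟨le_rfl, hc⟩]; exact p.2)
  have to_mid := gridGraph_reachable_of_eq_add_smul (d := (1, 0))
    (p := ⟨c • x, Set.mem_preimage.2 (by rw [blockIndex_smul hc]; exact p.2)⟩) (q := ⟨_, hmid⟩)
    (by simp) hr₁.1 (by ext <;> simp) fun k hk => Set.mem_preimage.2 (by
      change blockIndex c (c • x + k • (1, 0)) ∈ X
      rw [show k • ((1 : ℤ), (0 : ℤ)) = (k, 0) by simp,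
        blockIndex_smul_add hc x (k, 0) ⟨hk.1, hk.2.trans_lt hr₁.2⟩ ⟨le_rfl, hc⟩]
      exact p.2)
  have from_mid := gridGraph_reachable_of_eq_add_smul (d := (0, 1)) (p := ⟨_, hmid⟩) (q := p)
    (by simp) hr₂.1 (by ext <;> simp [x, blockIndex, Int.mul_ediv_add_emod]) fun k hk =>
      Set.mem_preimage.2 (by
        change blockIndex c (c • x + (p.1.1 % c, 0) + k • (0, 1)) ∈ X
        rw [add_assoc, show (p.1.1 % c, 0) + k • ((0 : ℤ), (1 : ℤ)) = (p.1.1 % c, k) by simp,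
          blockIndex_smul_add hc x _ hr₁ ⟨hk.1, hk.2.trans_lt hr₂.2⟩]
        exact p.2)
  exact to_mid.trans from_mid

theorem gridGraph_preimage_blockIndex_reachable_of_eq (hc : 0 < c) {p q : blockIndex c ⁻¹' X}
    (h : blockIndex c p = blockIndex c q) : (gridGraph (blockIndex c ⁻¹' X)).Reachable p q := by
  have hp := gridGraph_preimage_blockIndex_reachable_corner hc p
  simp only [h] at hp
  exact hp.symm.trans (gridGraph_preimage_blockIndex_reachable_corner hc q)

theorem gridGraph_adj_restrictPreimage_blockIndex (hc : 0 < c) {p q : blockIndex c ⁻¹' X}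
    (h : (gridGraph (blockIndex c ⁻¹' X)).Adj p q) :
    X.restrictPreimage (blockIndex c) p = X.restrictPreimage (blockIndex c) q ∨
      (gridGraph X).Adj (X.restrictPreimage (blockIndex c) p)
        (X.restrictPreimage (blockIndex c) q) := by
  have hle := abs_blockIndex_sub_le hc p q
  change |p.1.1 - q.1.1| + |p.1.2 - q.1.2| = 1 at h
  set δ₁ := |(blockIndex c p).1 - (blockIndex c q).1|
  set δ₂ := |(blockIndex c p).2 - (blockIndex c q).2|
  have h₁ : 0 ≤ δ₁ := abs_nonneg _
  have h₂ : 0 ≤ δ₂ := abs_nonneg _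
  obtain hzero | hone : δ₁ + δ₂ = 0 ∨ δ₁ + δ₂ = 1 := by omega
  · left
    ext
    · exact sub_eq_zero.1 (abs_eq_zero.1 (show δ₁ = 0 by omega))
    · exact sub_eq_zero.1 (abs_eq_zero.1 (show δ₂ = 0 by omega))
  · exact Or.inr hone

theorem exists_gridGraph_adj_restrictPreimage_blockIndex (hc : 0 < c) {x y : X}
    (h : (gridGraph X).Adj x y) : ∃ p q : blockIndex c ⁻¹' X,
      X.restrictPreimage (blockIndex c) p = x ∧ X.restrictPreimage (blockIndex c) q = y ∧
        (gridGraph (blockIndex c ⁻¹' X)).Adj p q := by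
  change |x.1.1 - y.1.1| + |x.1.2 - y.1.2| = 1 at h
  have h₁ := abs_nonneg (x.1.1 - y.1.1)
  have h₂ := abs_nonneg (x.1.2 - y.1.2)
  obtain ⟨a₁, b₁, ha₁, hb₁, hab₁⟩ :=
    Int.exists_ediv_eq_abs_sub_eq hc (x := x.1.1) (y := y.1.1) (by omega)
  obtain ⟨a₂, b₂, ha₂, hb₂, hab₂⟩ :=
    Int.exists_ediv_eq_abs_sub_eq hc (x := x.1.2) (y := y.1.2) (by omega)
  have hpx : blockIndex c (a₁, a₂) = x := by simp [blockIndex, ha₁, ha₂]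
  have hqy : blockIndex c (b₁, b₂) = y := by simp [blockIndex, hb₁, hb₂]
  refine ⟨⟨(a₁, a₂), by simp [hpx]⟩, ⟨(b₁, b₂), by simp [hqy]⟩, Subtype.ext hpx, Subtype.ext hqy,
    ?_⟩
  change |a₁ - b₁| + |a₂ - b₂| = 1
  rw [hab₁, hab₂, h]

end gridGraph_preimage

/-- The grid graph induced by `X^c` is connected iff the grid graph induced by `X` is. -/
theorem gridGraph_scaling_connected_iff (X : Set (ℤ × ℤ)) (c : ℕ) (hc : 0 < c) :
    (gridGraph (scaling X c)).Connected ↔ (gridGraph X).Connected := by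
  have hc' : (0 : ℤ) < c := by exact_mod_cast hc
  have hπ := Set.restrictPreimage_surjective X (blockIndex_surjective hc')
  rw [scaling_eq_preimage_blockIndex]
  exact ⟨fun h => h.of_surjective_of_adj _ hπ
      fun _ _ => gridGraph_adj_restrictPreimage_blockIndex hc',
    fun h => h.of_surjective_of_exists_adj _ hπ
      (fun _ _ huv => gridGraph_preimage_blockIndex_reachable_of_eq hc' (congrArg Subtype.val huv))
      fun _ _ => exists_gridGraph_adj_restrictPreimage_blockIndex hc'⟩
end

section
/- If each of X₁, X₂ ⊆ ℤ² is finite, X₁ ≅ X₂, and the grid graph induced by X₁ is connected, then the grid graph induced by X₂ is connected. In other words, being a coordinated shape is invariant under the equivalence relation ≅. -/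
/-! A point `p` of `X^c` lies in the cell `⌊p / c⌋ ∈ X`. Boxes contained in a set are connected
in its grid graph, and the box spanned by two points of `X^c` lies in `X^c` whenever the box
spanned by their cells lies in `X`; hence every point of `X^c` is joined to the corner `c • x` of
its cell, and the corners of adjacent cells are joined, so `X^c` inherits connectivity from `X`.
Conversely `⌊· / c⌋` sends adjacent points to equal or adjacent ones, so `X` inherits it from
`X^c`. Translations are graph isomorphisms. -/

open Set

namespace SimpleGraph

variable {V W : Type*} {G : SimpleGraph V} {H : SimpleGraph W}

theorem Reachable.map_of_adj (f : V → W) (hf : ∀ u v, G.Adj u v → H.Reachable (f u) (f v))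
    {u v : V} (huv : G.Reachable u v) : H.Reachable (f u) (f v) := by
  obtain ⟨w⟩ := huv
  induction w with
  | nil => rfl
  | cons h _ ih => exact (hf _ _ h).trans ih

theorem Connected.of_reachable_image (hG : G.Connected) (f : V → W)
    (hf : ∀ u v, G.Adj u v → H.Reachable (f u) (f v)) (hcover : ∀ w, ∃ v, H.Reachable (f v) w) :
    H.Connected := by
  have : Nonempty W := hG.nonempty.map f
  refine ⟨fun w₁ w₂ => ?_⟩
  obtain ⟨v₁, h₁⟩ := hcover w₁
  obtain ⟨v₂, h₂⟩ := hcover w₂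
  exact h₁.symm.trans ((Reachable.map_of_adj f hf (hG v₁ v₂)).trans h₂)

end SimpleGraph

theorem Prod.mem_uIcc_iff {α β : Type*} [Lattice α] [Lattice β] {p q r : α × β} :
    r ∈ uIcc p q ↔ r.1 ∈ uIcc p.1 q.1 ∧ r.2 ∈ uIcc p.2 q.2 := by
  simp only [uIcc, mem_Icc, Prod.le_def, Prod.fst_inf, Prod.snd_inf, Prod.fst_sup, Prod.snd_sup]
  tauto

theorem uIcc_subset_pair_of_l1_eq_one {p q : ℤ × ℤ} (h : |p.1 - q.1| + |p.2 - q.2| = 1) :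
    uIcc p q ⊆ {p, q} := by
  intro r hr
  rw [Prod.mem_uIcc_iff, mem_uIcc, mem_uIcc] at hr
  rw [mem_insert_iff, mem_singleton_iff, Prod.ext_iff, Prod.ext_iff]
  grind

theorem exists_l1_eq_one_mem_uIcc_of_ne {p q : ℤ × ℤ} (hpq : p ≠ q) :
    ∃ r ∈ uIcc p q, |p.1 - r.1| + |p.2 - r.2| = 1 ∧
      (r.1 - q.1).natAbs + (r.2 - q.2).natAbs < (p.1 - q.1).natAbs + (p.2 - q.2).natAbs := by
  obtain ⟨p₁, p₂⟩ := p
  obtain ⟨q₁, q₂⟩ := q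
  simp only [Prod.mem_uIcc_iff, mem_uIcc]
  rcases lt_trichotomy p₁ q₁ with h | rfl | h
  · exact ⟨(p₁ + 1, p₂), by omega, by simp, by omega⟩
  · rcases lt_trichotomy p₂ q₂ with h | rfl | h
    · exact ⟨(p₁, p₂ + 1), by omega, by simp, by omega⟩
    · exact absurd rfl hpq
    · exact ⟨(p₁, p₂ - 1), by omega, by simp, by omega⟩
  · exact ⟨(p₁ - 1, p₂), by omega, by simp, by omega⟩

theorem gridGraph_reachable_of_uIcc_subset {Y : Set (ℤ × ℤ)} {p q : ℤ × ℤ} (hp : p ∈ Y)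
    (hq : q ∈ Y) (hbox : uIcc p q ⊆ Y) : (gridGraph Y).Reachable ⟨p, hp⟩ ⟨q, hq⟩ := by
  by_cases hpq : p = q
  · subst hpq; rfl
  obtain ⟨r, hr, hadj, hlt⟩ := exists_l1_eq_one_mem_uIcc_of_ne hpq
  have hrq : (gridGraph Y).Reachable ⟨r, hbox hr⟩ ⟨q, hq⟩ :=
    gridGraph_reachable_of_uIcc_subset _ hq ((uIcc_subset_uIcc_right hr).trans hbox)
  exact (show (gridGraph Y).Adj ⟨p, hp⟩ ⟨r, hbox hr⟩ from hadj).reachable.trans hrq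
termination_by (p.1 - q.1).natAbs + (p.2 - q.2).natAbs
decreasing_by exact hlt

theorem Int.abs_ediv_sub_ediv_le_s9 (a b : ℤ) {c : ℤ} (hc : 0 < c) : |a / c - b / c| ≤ |a - b| := by
  wlog hba : b ≤ a generalizing a b
  · rw [abs_sub_comm, abs_sub_comm a]
    exact this b a (by omega)
  have hle : b / c ≤ a / c := Int.ediv_le_ediv hc hba
  have hge : a / c ≤ b / c + (a - b) :=
    calc a / c ≤ (b + (a - b) * c) / c := Int.ediv_le_ediv hc (by nlinarith)
      _ = b / c + (a - b) := Int.add_mul_ediv_right _ _ hc.ne'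
  rw [abs_of_nonneg (by omega), abs_of_nonneg (by omega)]
  omega

-- For `0 < c`, `Int.ediv` rounds down, so this is the `⌊· / c⌋` of `scaling`.
def cell (c : ℤ) (p : ℤ × ℤ) : ℤ × ℤ := (p.1 / c, p.2 / c)

theorem cell_smul {c : ℤ} (hc : c ≠ 0) (x : ℤ × ℤ) : cell c (c • x) = x := by
  simp [cell, Int.mul_ediv_cancel_left _ hc]

theorem cell_mapsTo_uIcc {c : ℤ} (hc : 0 < c) {p q : ℤ × ℤ} :
    MapsTo (cell c) (uIcc p q) (uIcc (cell c p) (cell c q)) := by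
  have hmono : Monotone (· / c) := fun _ _ h => Int.ediv_le_ediv hc h
  intro r hr
  rw [Prod.mem_uIcc_iff] at hr ⊢
  exact ⟨hmono.mapsTo_uIcc hr.1, hmono.mapsTo_uIcc hr.2⟩

theorem cell_eq_or_l1_eq_one {c : ℤ} (hc : 0 < c) {p q : ℤ × ℤ}
    (h : |p.1 - q.1| + |p.2 - q.2| = 1) :
    cell c p = cell c q ∨ |(cell c p).1 - (cell c q).1| + |(cell c p).2 - (cell c q).2| = 1 := by
  have h₁ := Int.abs_ediv_sub_ediv_le_s9 p.1 q.1 hc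
  have h₂ := Int.abs_ediv_sub_ediv_le_s9 p.2 q.2 hc
  simp only [cell, Prod.ext_iff]
  grind

section Scaling

variable {X : Set (ℤ × ℤ)} {c : ℕ}

theorem mem_scaling {p : ℤ × ℤ} : p ∈ scaling X c ↔ cell c p ∈ X := by
  simp only [scaling, cell, mem_ofPred_eq, Int.fdiv_eq_ediv_of_nonneg _ (Int.natCast_nonneg c)]

theorem scaling_reachable_of_uIcc_subset (hc : 0 < c) {p q : ℤ × ℤ} (hp : p ∈ scaling X c)
    (hq : q ∈ scaling X c) (hbox : uIcc (cell c p) (cell c q) ⊆ X) :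
    (gridGraph (scaling X c)).Reachable ⟨p, hp⟩ ⟨q, hq⟩ :=
  gridGraph_reachable_of_uIcc_subset hp hq fun _ hr =>
    mem_scaling.2 (hbox (cell_mapsTo_uIcc (Int.natCast_pos.2 hc) hr))

theorem smul_mem_scaling (hc : 0 < c) {x : ℤ × ℤ} (hx : x ∈ X) : (c : ℤ) • x ∈ scaling X c := by
  rwa [mem_scaling, cell_smul (Int.natCast_pos.2 hc).ne']

theorem gridGraph_scaling_connected (hc : 0 < c) (h : (gridGraph X).Connected) :
    (gridGraph (scaling X c)).Connected := by
  have hc' : (c : ℤ) ≠ 0 := (Int.natCast_pos.2 hc).ne'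
  refine h.of_reachable_image (fun x => ⟨(c : ℤ) • x.1, smul_mem_scaling hc x.2⟩) ?_ ?_
  · rintro x y hxy
    refine scaling_reachable_of_uIcc_subset hc _ _ ?_
    rw [cell_smul hc', cell_smul hc']
    exact (uIcc_subset_pair_of_l1_eq_one hxy).trans (pair_subset x.2 y.2)
  · rintro ⟨p, hp⟩
    refine ⟨⟨cell c p, mem_scaling.1 hp⟩, scaling_reachable_of_uIcc_subset hc _ _ ?_⟩
    rw [cell_smul hc', uIcc_self]
    exact singleton_subset_iff.2 (mem_scaling.1 hp)

theorem gridGraph_connected_of_scaling (hc : 0 < c) (h : (gridGraph (scaling X c)).Connected) :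
    (gridGraph X).Connected := by
  refine h.of_reachable_image (fun p => ⟨cell c p.1, mem_scaling.1 p.2⟩) ?_ ?_
  · rintro p q hpq
    rcases cell_eq_or_l1_eq_one (Int.natCast_pos.2 hc) hpq with heq | hadj
    · simp only [heq]; rfl
    · exact SimpleGraph.Adj.reachable hadj
  · intro x
    refine ⟨⟨(c : ℤ) • x.1, smul_mem_scaling hc x.2⟩, ?_⟩
    simp only [cell_smul (Int.natCast_pos.2 hc).ne']
    rfl

end Scaling

theorem gridGraph_translateSet_connected {Y : Set (ℤ × ℤ)} (v : ℤ × ℤ)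
    (h : (gridGraph Y).Connected) : (gridGraph (translateSet Y v)).Connected := by
  refine h.of_reachable_image (fun p => ⟨p.1 + v, p.1, p.2, rfl⟩) (fun p q hpq => ?_) ?_
  · refine SimpleGraph.Adj.reachable ?_
    simpa only [gridGraph, Prod.fst_add, Prod.snd_add, add_sub_add_right_eq_sub] using hpq
  · rintro ⟨_, p, hp, rfl⟩
    exact ⟨⟨p, hp⟩, .rfl⟩

theorem cong_connected_general (X₁ X₂ : Set (ℤ × ℤ))
    (hcong : Cong X₁ X₂) (hconn : (gridGraph X₁).Connected) :
    (gridGraph X₂).Connected := by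
  obtain ⟨a, b, ha, hb, v, heq⟩ := hcong
  refine gridGraph_connected_of_scaling hb ?_
  rw [heq]
  exact gridGraph_translateSet_connected v (gridGraph_scaling_connected ha hconn)

/-- Being a coordinated shape is invariant under `≅`: if `X₁` and `X₂` are finite,
`X₁ ≅ X₂`, and the grid graph induced by `X₁` is connected, then so is the grid graph
induced by `X₂`. -/
theorem cong_connected (X₁ X₂ : Set (ℤ × ℤ)) (h₁ : X₁.Finite) (h₂ : X₂.Finite)
    (hcong : Cong X₁ X₂) (hconn : (gridGraph X₁).Connected) :
    (gridGraph X₂).Connected :=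
  cong_connected_general X₁ X₂ hcong hconn
end
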